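/- Discrete power balance for the structure-preserving discretization of the inviscid Burgers' equation: if v_d(t,·) ∈ H¹₀(0,1) depends C¹ on t, e_d(t,·) ∈ H¹₀(0,1), and for all test functions φ ∈ V_h ⊂ H¹₀(0,1) one has ∫₀¹ ∂ₜv_d φ = ∫₀¹ e_d φ' and ∫₀¹ e_d φ = ∫₀¹ (v_d²/2) φ, with e_d ∈ V_h and v_d²/2 ∈ V_h-testable, then d/dt ∫₀¹ v_d³/6 dx = 0. -/

import Mathlib

/-! The power `∫ v³/6` is differentiated under the integral sign without any domination
argument: `v³/6` moves in the finite-dimensional space `Vh * Vh * Vh`, whose dual is spanned by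
point evaluations, so pointwise differentiability in time gives differentiability of every linear
functional, in particular of the integral. Its derivative `∫ (v²/2) ∂ₜv` equals `∫ e ∂ₜv` by the
constitutive relation tested with `∂ₜv`, which equals `∫ e e'` by the dynamics tested with `e`,
and this vanishes because `e e' = (e²/2)'` and `e` vanishes at the boundary. -/

open Set

lemma Submodule.span_range_evalDual_eq_top {K X : Type*} [Field K] (W : Submodule K (X → K))
    [FiniteDimensional K W] :
    span K (range fun x => (LinearMap.proj x).comp W.subtype) = ⊤ := by
  rw [← Subspace.dualCoannihilator_dualAnnihilator_eq (W := span K _),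
    dualAnnihilator_eq_top_iff, eq_bot_iff]
  intro w hw
  rw [mem_dualCoannihilator] at hw
  exact Subtype.ext <| funext fun x => hw _ (subset_span ⟨x, rfl⟩)

lemma Submodule.hasDerivAt_dual_apply {𝕜 X : Type*} [NontriviallyNormedField 𝕜]
    (W : Submodule 𝕜 (X → 𝕜)) [FiniteDimensional 𝕜 W] {γ : 𝕜 → X → 𝕜} {γ' : X → 𝕜} {t : 𝕜}
    (hγ : ∀ s, γ s ∈ W) (hγ' : γ' ∈ W) (hderiv : ∀ x, HasDerivAt (fun s => γ s x) (γ' x) t)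
    (ℓ : Module.Dual 𝕜 W) :
    HasDerivAt (fun s => ℓ ⟨γ s, hγ s⟩) (ℓ ⟨γ', hγ'⟩) t := by
  have hℓ : ℓ ∈ span 𝕜 (range fun x => (LinearMap.proj x).comp W.subtype) := by
    rw [W.span_range_evalDual_eq_top]
    trivial
  induction hℓ using span_induction with
  | mem ℓ hℓ =>
    obtain ⟨x, rfl⟩ := hℓ
    exact hderiv x
  | zero => exact hasDerivAt_const t 0
  | add ℓ₁ ℓ₂ _ _ ih₁ ih₂ => exact ih₁.add ih₂
  | smul a ℓ _ ih => exact ih.const_mul a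

instance Submodule.finiteDimensional_mul {K A : Type*} [Field K] [Ring A] [Algebra K A]
    (M N : Submodule K A) [FiniteDimensional K M] [FiniteDimensional K N] :
    FiniteDimensional K (M * N : Submodule K A) :=
  Module.Finite.iff_fg.mpr <| (Module.Finite.iff_fg.mp ‹_›).mul (Module.Finite.iff_fg.mp ‹_›)

lemma Submodule.mul_le_toSubmodule {R A : Type*} [CommSemiring R] [Semiring A] [Algebra R A]
    {S : Subalgebra R A} {M N : Submodule R A} (hM : M ≤ Subalgebra.toSubmodule S)
    (hN : N ≤ Subalgebra.toSubmodule S) : M * N ≤ Subalgebra.toSubmodule S :=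
  mul_le.mpr fun _ hm _ hn => S.mul_mem (hM hm) (hN hn)

lemma Submodule.const_mul_mul_mul_mem {R X : Type*} [CommSemiring R] {M N P : Submodule R (X → R)}
    {f g h : X → R} (hf : f ∈ M) (hg : g ∈ N) (hh : h ∈ P) (c : R) :
    (fun x => c * (f x * g x * h x)) ∈ M * N * P :=
  smul_mem _ c (mul_mem_mul (mul_mem_mul hf hg) hh)

def continuousOnSubalgebra (s : Set ℝ) : Subalgebra ℝ (ℝ → ℝ) where
  carrier := {f | ContinuousOn f s}
  mul_mem' hf hg := hf.mul hg
  add_mem' hf hg := hf.add hg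
  algebraMap_mem' _ := continuousOn_const

noncomputable def Submodule.intervalIntegralDual (W : Submodule ℝ (ℝ → ℝ)) {a b : ℝ}
    (hW : W ≤ Subalgebra.toSubmodule (continuousOnSubalgebra (uIcc a b))) :
    Module.Dual ℝ W where
  toFun f := ∫ x in a..b, (f : ℝ → ℝ) x
  map_add' f g :=
    intervalIntegral.integral_add (hW f.2).intervalIntegrable (hW g.2).intervalIntegrable
  map_smul' c _ := intervalIntegral.integral_const_mul c _

lemma hasDerivAt_intervalIntegral_of_mem_finiteDimensional (W : Submodule ℝ (ℝ → ℝ))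
    [FiniteDimensional ℝ W] {a b : ℝ}
    (hW : W ≤ Subalgebra.toSubmodule (continuousOnSubalgebra (uIcc a b)))
    {γ : ℝ → ℝ → ℝ} {γ' : ℝ → ℝ} {t : ℝ} (hγ : ∀ s, γ s ∈ W) (hγ' : γ' ∈ W)
    (hderiv : ∀ x, HasDerivAt (fun s => γ s x) (γ' x) t) :
    HasDerivAt (fun s => ∫ x in a..b, γ s x) (∫ x in a..b, γ' x) t :=
  W.hasDerivAt_dual_apply hγ hγ' hderiv (W.intervalIntegralDual hW)

lemma integral_mul_deriv_self_eq_zero {g : ℝ → ℝ} {a b : ℝ} (hab : a ≤ b)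
    (hg : DifferentiableOn ℝ g (Icc a b)) (hgab : g a = g b) :
    ∫ x in a..b, g x * deriv g x = 0 := by
  by_cases hint : IntervalIntegrable (fun x => g x * deriv g x) MeasureTheory.volume a b
  · have hder : ∀ x ∈ Ioo a b, HasDerivAt (fun x => g x ^ 2 / 2) (g x * deriv g x) x := by
      intro x hx
      have hgx := (hg x (Ioo_subset_Icc_self hx)).differentiableAt (Icc_mem_nhds hx.1 hx.2)
      refine ((hgx.hasDerivAt.fun_pow 2).div_const 2).congr_deriv ?_
      norm_num
      ring
    rw [intervalIntegral.integral_eq_sub_of_hasDerivAt_of_le hab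
      ((hg.continuousOn.pow 2).div_const 2) hder hint]
    simp [hgab]
  · exact intervalIntegral.integral_undef hint

/-- Discrete power balance for the structure-preserving Galerkin
discretization of the inviscid Burgers' equation with homogeneous boundary
conditions: the discrete Hamiltonian `∫₀¹ v_d³/6` is conserved. -/
theorem discrete_power_balance_inviscid
    (Vh : Submodule ℝ (ℝ → ℝ)) [FiniteDimensional ℝ Vh]
    (hbc : ∀ φ ∈ Vh, φ 0 = 0 ∧ φ 1 = 0)
    (hdiff : ∀ φ ∈ Vh, DifferentiableOn ℝ φ (Icc (0:ℝ) 1))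
    (vd ed vdt : ℝ → ℝ → ℝ)
    (hvd : ∀ t, vd t ∈ Vh) (hed : ∀ t, ed t ∈ Vh) (hvdt : ∀ t, vdt t ∈ Vh)
    (hdt : ∀ t x, HasDerivAt (fun s => vd s x) (vdt t x) t)
    (hdyn : ∀ t, ∀ φ ∈ Vh,
      ∫ x in (0:ℝ)..1, vdt t x * φ x = ∫ x in (0:ℝ)..1, ed t x * deriv φ x)
    (hconst : ∀ t, ∀ φ ∈ Vh,
      ∫ x in (0:ℝ)..1, ed t x * φ x = ∫ x in (0:ℝ)..1, (vd t x)^2 / 2 * φ x)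
    (t : ℝ) :
    HasDerivAt (fun s => ∫ x in (0:ℝ)..1, (vd s x)^3 / 6) 0 t := by
  have hVh : Vh ≤ Subalgebra.toSubmodule (continuousOnSubalgebra (uIcc 0 1)) := fun φ hφ => by
    rw [uIcc_of_le zero_le_one]
    exact (hdiff φ hφ).continuousOn
  have hpower : HasDerivAt (fun s => ∫ x in (0:ℝ)..1, (vd s x)^3 / 6)
      (∫ x in (0:ℝ)..1, (vd t x)^2 / 2 * vdt t x) t := by
    refine hasDerivAt_intervalIntegral_of_mem_finiteDimensional (Vh * Vh * Vh)
      (Submodule.mul_le_toSubmodule (Submodule.mul_le_toSubmodule hVh hVh) hVh)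
      (fun s => ?_) ?_ fun x => ?_
    · convert Submodule.const_mul_mul_mul_mem (hvd s) (hvd s) (hvd s) 6⁻¹ using 2
      ring
    · convert Submodule.const_mul_mul_mul_mem (hvd t) (hvd t) (hvdt t) 2⁻¹ using 2
      ring
    · refine (((hdt t x).pow 3).div_const 6).congr_deriv ?_
      ring
  obtain ⟨he0, he1⟩ := hbc _ (hed t)
  have hzero : ∫ x in (0:ℝ)..1, (vd t x)^2 / 2 * vdt t x = 0 :=
    calc ∫ x in (0:ℝ)..1, (vd t x)^2 / 2 * vdt t x
        = ∫ x in (0:ℝ)..1, vdt t x * ed t x := by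
          rw [← hconst t _ (hvdt t)]
          simp only [mul_comm]
      _ = ∫ x in (0:ℝ)..1, ed t x * deriv (ed t) x := hdyn t _ (hed t)
      _ = 0 := integral_mul_deriv_self_eq_zero zero_le_one (hdiff _ (hed t)) (he0.trans he1.symm)
  rwa [hzero] at hpower
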